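/- A finite subset of Z^3 (with labels) supported on I^- \cup II \cup III corresponds to a T-invariant C[x1,x2,x3]-submodule of M/O_C if and only if it satisfies the closure rules: (i) for w in I^-, if any of w-e_1, w-e_2, w-e_3 supports a box then w supports a box; (ii) for w in II not in Cyl_i, if any of w-e_j supports a box other than a type III box labelled by the line C\cdot i, then w supports a box; (iii) for w in III, the box at w must contain the span of the subspaces induced from boxes at w-e_1, w-e_2, w-e_3. -/

import Mathlib

/-!
Shared combinatorial model of the T-module `M/O_{C_μ}`:
for each weight `w ∈ ℤ³`, the fiber of `M` at `w` has one basis vector for each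
coordinate cylinder `Cyl_i` (determined by the partitions `μ i`) containing `w`, and
`O_C ⊆ M` is generated by `(1,1,1)`.
-/

open scoped Classical

noncomputable section

/-- The weight lattice `ℤ³`. -/
abbrev W3 := Fin 3 → ℤ

/-- The standard basis vector `e_j`. -/
def eW (j : Fin 3) : W3 := fun i => if i = j then 1 else 0

variable (μ : Fin 3 → YoungDiagram)

/-- `w` lies in the cylinder `Cyl_i` along the `x_i`-axis with cross-section `μ i`. -/
def inCyl (i : Fin 3) (w : W3) : Prop :=
  0 ≤ w (i + 1) ∧ 0 ≤ w (i + 2) ∧ ((w (i + 1)).toNat, (w (i + 2)).toNat) ∈ μ i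

/-- The fiber of `M` at weight `w`: one copy of `ℂ` for each cylinder containing `w`. -/
abbrev VF (w : W3) : Type := {i : Fin 3 // inCyl μ i w} → ℂ

/-- Number of cylinders containing `w`. -/
def numCyl (w : W3) : ℕ := Nat.card {i : Fin 3 // inCyl μ i w}

/-- `w` has all coordinates nonnegative. -/
def nonnegW (w : W3) : Prop := ∀ i, 0 ≤ w i

/-- The vector `(1,1,1)_w`. -/
def constV (w : W3) : VF μ w := fun _ => 1

/-- The fiber of `O_C ⊆ M` at weight `w`: the line spanned by `(1,1,1)_w` for
nonnegative `w`, and `0` otherwise. -/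
def ocSub (w : W3) : Submodule ℂ (VF μ w) :=
  if nonnegW w then Submodule.span ℂ {constV μ w} else ⊥

/-- Multiplication by `x_j` on fibers, `M_w → M_{w+e_j}`: the component in `Cyl_i`
survives exactly when both `w` and `w + e_j` lie in `Cyl_i`. -/
def mapV (j : Fin 3) (w : W3) : VF μ w →ₗ[ℂ] VF μ (w + eW j) where
  toFun f k := if h : inCyl μ k.1 w then f ⟨k.1, h⟩ else 0
  map_add' f g := by
    funext k; by_cases h : inCyl μ k.1 w <;> simp [h]
  map_smul' c f := by
    funext k; by_cases h : inCyl μ k.1 w <;> simp [h]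

/-- A family of subspaces of the fibers is closed under multiplication by the `x_j`:
this is the condition of being a T-invariant `ℂ[x₁,x₂,x₃]`-submodule of `M`. -/
def MultClosed (S : ∀ w : W3, Submodule ℂ (VF μ w)) : Prop :=
  ∀ (w : W3) (j : Fin 3), (S w).map (mapV μ j w) ≤ S (w + eW j)

/-- The family contains `O_C`. -/
def ContainsOC (S : ∀ w : W3, Submodule ℂ (VF μ w)) : Prop :=
  ∀ w : W3, ocSub μ w ≤ S w

/-- The family agrees with `O_C` away from finitely many weights (finitely generated
quotient). -/
def FiniteSupp (S : ∀ w : W3, Submodule ℂ (VF μ w)) : Prop :=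
  {w : W3 | S w ≠ ocSub μ w}.Finite

/-- weight types -/
def typeIminus (w : W3) : Prop := (∃ i, inCyl μ i w) ∧ ¬ nonnegW w

def typeII (w : W3) : Prop := nonnegW w ∧ numCyl μ w = 2

def typeIII (w : W3) : Prop := nonnegW w ∧ numCyl μ w = 3

/-- The configuration supports a box at `w` exactly when `S w` is strictly larger
than the fiber of `O_C`. -/
def SupportsBox (S : ∀ w : W3, Submodule ℂ (VF μ w)) (w : W3) : Prop :=
  S w ≠ ocSub μ w

/-- The line `ℂ · i_w` in the fiber. -/
def lineI (w : W3) (i : Fin 3) : Submodule ℂ (VF μ w) :=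
  Submodule.span ℂ {fun k => if k.1 = i then 1 else 0}

/-- A type III box at `w` labelled by the 1-dimensional subspace `ℂ · i_w`. -/
def labelledBy (S : ∀ w : W3, Submodule ℂ (VF μ w)) (w : W3) (i : Fin 3) : Prop :=
  typeIII μ w ∧ S w = ocSub μ w ⊔ lineI μ w i


/-!
STATEMENT 10: a finite labelled box configuration supported on `I⁻ ∪ II ∪ III`
(encoded as a family `S` of subspaces of the fibers of `M` containing `O_C` and
agreeing with `O_C` away from finitely many weights) corresponds to a T-invariant
`ℂ[x₁,x₂,x₃]`-submodule of `M/O_C` if and only if it satisfies the closure rules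
(i), (ii), (iii).
-/

/-- Rule (i): for `w` of type I⁻, if a neighbour `w - e_j` supports a box then `w`
supports a box. -/
def RuleI (S : ∀ w : W3, Submodule ℂ (VF μ w)) : Prop :=
  ∀ (w : W3) (j : Fin 3), typeIminus μ (w + eW j) →
    SupportsBox μ S w → SupportsBox μ S (w + eW j)

/-- Rule (ii): for `w` of type II with `w ∉ Cyl_i`, if a neighbour `w - e_j` supports
a box other than a type III box labelled by `ℂ · i`, then `w` supports a box. -/
def RuleII (S : ∀ w : W3, Submodule ℂ (VF μ w)) : Prop :=
  ∀ (w : W3) (j i : Fin 3), typeII μ (w + eW j) → ¬ inCyl μ i (w + eW j) →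
    SupportsBox μ S w → ¬ labelledBy μ S w i → SupportsBox μ S (w + eW j)

/-- Rule (iii): for `w` of type III, the box at `w` must contain the span of the
subspaces induced from the boxes at `w - e_1`, `w - e_2`, `w - e_3`. -/
def RuleIII (S : ∀ w : W3, Submodule ℂ (VF μ w)) : Prop :=
  ∀ (w : W3) (j : Fin 3), typeIII μ (w + eW j) →
    (S w).map (mapV μ j w) ≤ S (w + eW j)

section Helpers

variable (μ : Fin 3 → YoungDiagram)

lemma fin3 : ∀ i k : Fin 3, k = i ∨ k = i + 1 ∨ k = i + 2 := by decide

lemma fin03 : ∀ k : Fin 3, k = 0 ∨ k = 1 ∨ k = 2 := by decide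

lemma finNe : ∀ i : Fin 3, i + 1 ≠ i ∧ i + 2 ≠ i ∧ i + 1 ≠ i + 2 := by decide

lemma finCover2 : ∀ i i' c : Fin 3, i ≠ i' → c = i + 1 ∨ c = i + 2 ∨ c = i' + 1 ∨ c = i' + 2 := by
  decide

lemma nonneg_add {w : W3} (h : nonnegW w) (j : Fin 3) : nonnegW (w + eW j) := by
  intro c
  have := h c
  show 0 ≤ w c + eW j c
  simp only [eW]
  split <;> omega

lemma le_add_eW (w : W3) (j c : Fin 3) : w c ≤ (w + eW j) c := by
  show w c ≤ w c + eW j c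
  simp only [eW]; split <;> omega

lemma two_cyl_nonneg {w : W3} {i i' : Fin 3} (hne : i ≠ i') (h : inCyl μ i w)
    (h' : inCyl μ i' w) : nonnegW w := by
  intro c
  rcases finCover2 i i' c hne with rfl | rfl | rfl | rfl
  exacts [h.1, h.2.1, h'.1, h'.2.1]

lemma uniq_cyl {w : W3} (hn : ¬ nonnegW w) {i i' : Fin 3} (h : inCyl μ i w)
    (h' : inCyl μ i' w) : i = i' := by
  by_contra hc
  exact hn (two_cyl_nonneg μ hc h h')

lemma neg_coord {w : W3} {i : Fin 3} (h : inCyl μ i w) {c : Fin 3} (hc : w c < 0) : c = i := by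
  rcases fin3 i c with rfl | rfl | rfl
  · rfl
  · exact absurd h.1 (not_le.2 hc)
  · exact absurd h.2.1 (not_le.2 hc)

lemma down_closed {w : W3} (hn : nonnegW w) {i j : Fin 3} (h : inCyl μ i (w + eW j)) :
    inCyl μ i w := by
  refine ⟨hn _, hn _, ?_⟩
  refine (μ i).up_left_mem ?_ ?_ h.2.2
  · exact Int.toNat_le_toNat (le_add_eW w j _)
  · exact Int.toNat_le_toNat (le_add_eW w j _)

lemma mapV_apply_pos {w : W3} (j : Fin 3) (f : VF μ w) (k : {i : Fin 3 // inCyl μ i (w + eW j)})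
    (h : inCyl μ k.1 w) : mapV μ j w f k = f ⟨k.1, h⟩ := by
  simp [mapV, dif_pos h]

lemma mapV_apply_neg {w : W3} (j : Fin 3) (f : VF μ w) (k : {i : Fin 3 // inCyl μ i (w + eW j)})
    (h : ¬ inCyl μ k.1 w) : mapV μ j w f k = 0 := by
  simp [mapV, dif_neg h]

lemma ocSub_of_nonneg {w : W3} (h : nonnegW w) :
    ocSub μ w = Submodule.span ℂ {constV μ w} := if_pos h

lemma ocSub_of_neg {w : W3} (h : ¬ nonnegW w) : ocSub μ w = ⊥ := if_neg h

lemma mapV_const {w : W3} (hn : nonnegW w) (j : Fin 3) :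
    mapV μ j w (constV μ w) = constV μ (w + eW j) := by
  funext k
  rw [mapV_apply_pos μ j _ k (down_closed μ hn k.2)]
  rfl

lemma map_ocSub (w : W3) (j : Fin 3) :
    (ocSub μ w).map (mapV μ j w) ≤ ocSub μ (w + eW j) := by
  by_cases hn : nonnegW w
  · rw [ocSub_of_nonneg μ hn, ocSub_of_nonneg μ (nonneg_add hn j), Submodule.map_span,
      Set.image_singleton, mapV_const μ hn j]
  · rw [ocSub_of_neg μ hn]
    simp

lemma numCyl_eq (w : W3) :
    numCyl μ w = (if inCyl μ 0 w then 1 else 0) + (if inCyl μ 1 w then 1 else 0) +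
      (if inCyl μ 2 w then 1 else 0) := by
  rw [numCyl, Nat.card_eq_fintype_card, Fintype.card_subtype, Finset.card_filter,
    Fin.sum_univ_three]

lemma numCyl_three_iff {w : W3} : numCyl μ w = 3 ↔ ∀ i, inCyl μ i w := by
  rw [numCyl_eq]
  constructor
  · intro h i
    rcases fin03 i with rfl | rfl | rfl <;> by_contra hc <;> simp [hc] at h <;>
      split_ifs at h <;> omega
  · intro h
    simp [h 0, h 1, h 2]

lemma numCyl_two_of {w : W3} {i : Fin 3} (hi : ¬ inCyl μ i w) (ha : inCyl μ (i + 1) w)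
    (hb : inCyl μ (i + 2) w) : numCyl μ w = 2 := by
  rw [numCyl_eq]
  rcases fin03 i with rfl | rfl | rfl <;> simp_all

lemma cyl_of_two {w : W3} {i : Fin 3} (h : numCyl μ w = 2) (hi : ¬ inCyl μ i w) :
    inCyl μ (i + 1) w ∧ inCyl μ (i + 2) w := by
  rw [numCyl_eq] at h
  rcases fin03 i with rfl | rfl | rfl <;>
    constructor <;> by_contra hc <;> simp_all <;> split_ifs at h <;> omega

lemma eq_top_of_unique {w : W3} (S' : Submodule ℂ (VF μ w)) (k₀ : {i : Fin 3 // inCyl μ i w})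
    (huniq : ∀ k, k = k₀) {g : VF μ w} (hg : g ∈ S') (hg0 : g k₀ ≠ 0) : S' = ⊤ := by
  rw [eq_top_iff]
  rintro f -
  have hf : f = (f k₀ / g k₀) • g := by
    funext k
    rw [huniq k]
    simp only [Pi.smul_apply, smul_eq_mul]
    rw [div_mul_cancel₀ _ hg0]
  rw [hf]
  exact S'.smul_mem _ hg

lemma eq_top_of_two {w : W3} (S' : Submodule ℂ (VF μ w)) (ka kb : {i : Fin 3 // inCyl μ i w})
    (hcover : ∀ k, k = ka ∨ k = kb) (hconst : constV μ w ∈ S') {g : VF μ w} (hg : g ∈ S')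
    (hne : g ka ≠ g kb) : S' = ⊤ := by
  rw [eq_top_iff]
  rintro f -
  have hd : g ka - g kb ≠ 0 := sub_ne_zero.2 hne
  have hf : f = ((f ka - f kb) / (g ka - g kb)) • g +
      (f kb - ((f ka - f kb) / (g ka - g kb)) * g kb) • constV μ w := by
    funext k
    rcases hcover k with rfl | rfl <;>
      simp only [Pi.add_apply, Pi.smul_apply, smul_eq_mul, constV, mul_one] <;>
      field_simp <;> ring
  rw [hf]
  exact add_mem (S'.smul_mem _ hg) (S'.smul_mem _ hconst)

end Helpers
theorem box_configuration_is_submodule_iff_closure_rules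
    (S : ∀ w : W3, Submodule ℂ (VF μ w))
    (hOC : ContainsOC μ S) (hfin : FiniteSupp μ S) :
    MultClosed μ S ↔ (RuleI μ S ∧ RuleII μ S ∧ RuleIII μ S) := by
  constructor
  · intro hMC
    refine ⟨?_, ?_, fun w j _ => hMC w j⟩
    · -- Rule I
      intro w j hIm hSw
      obtain ⟨⟨i₀, hi₀⟩, hn'⟩ := hIm
      have hnw : ¬ nonnegW w := fun h => hn' (nonneg_add h j)
      have hSw' : S w ≠ ⊥ := by rw [← ocSub_of_neg μ hnw]; exact hSw
      obtain ⟨f, hfS, hf0⟩ := (Submodule.ne_bot_iff _).1 hSw'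
      obtain ⟨k, hk⟩ : ∃ k, f k ≠ 0 := by
        by_contra h
        push_neg at h
        exact hf0 (funext h)
      obtain ⟨d, hd⟩ : ∃ d, (w + eW j) d < 0 := by
        by_contra h
        push_neg at h
        exact hn' fun c => not_lt.1 (by simpa using h c)
      have hd1 : d = i₀ := neg_coord μ hi₀ hd
      have hwd : w d < 0 := lt_of_le_of_lt (le_add_eW w j d) hd
      have hd2 : d = k.1 := neg_coord μ k.2 hwd
      have hk1 : k.1 = i₀ := by rw [← hd2, hd1]
      have hik : inCyl μ k.1 (w + eW j) := by rw [hk1]; exact hi₀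
      have hgS : mapV μ j w f ∈ S (w + eW j) :=
        hMC w j (Submodule.mem_map_of_mem hfS)
      intro hEq
      rw [ocSub_of_neg μ hn'] at hEq
      rw [hEq, Submodule.mem_bot] at hgS
      apply hk
      have := congrFun hgS ⟨k.1, hik⟩
      rwa [mapV_apply_pos μ j f ⟨k.1, hik⟩ k.2] at this
    · -- Rule II
      intro w j i hII hi hbox hnl
      obtain ⟨hn', hnum'⟩ := hII
      obtain ⟨ha, hb⟩ := cyl_of_two μ hnum' hi
      set ka : {i' : Fin 3 // inCyl μ i' (w + eW j)} := ⟨i + 1, ha⟩ with hka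
      set kb : {i' : Fin 3 // inCyl μ i' (w + eW j)} := ⟨i + 2, hb⟩ with hkb
      have hcover : ∀ k : {i' : Fin 3 // inCyl μ i' (w + eW j)}, k = ka ∨ k = kb := by
        intro k
        rcases fin3 i k.1 with h | h | h
        · exact absurd (h ▸ k.2) hi
        · exact Or.inl (Subtype.ext h)
        · exact Or.inr (Subtype.ext h)
      by_cases hnw : nonnegW w
      · -- w nonnegative
        have ha' : inCyl μ (i + 1) w := down_closed μ hnw ha
        have hb' : inCyl μ (i + 2) w := down_closed μ hnw hb
        set ka' : {i' : Fin 3 // inCyl μ i' w} := ⟨i + 1, ha'⟩ with hka'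
        set kb' : {i' : Fin 3 // inCyl μ i' w} := ⟨i + 2, hb'⟩ with hkb'
        by_cases hex : ∃ h ∈ S w, h ka' ≠ h kb'
        · obtain ⟨g, hgS, hgne⟩ := hex
          have hmS : mapV μ j w g ∈ S (w + eW j) := hMC w j (Submodule.mem_map_of_mem hgS)
          intro hEq
          rw [hEq, ocSub_of_nonneg μ hn', Submodule.mem_span_singleton] at hmS
          obtain ⟨c, hc⟩ := hmS
          apply hgne
          have e1 : mapV μ j w g ka = g ka' := mapV_apply_pos μ j g ka ha'
          have e2 : mapV μ j w g kb = g kb' := mapV_apply_pos μ j g kb hb'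
          have v1 := congrFun hc ka
          have v2 := congrFun hc kb
          simp only [Pi.smul_apply, smul_eq_mul, constV, mul_one] at v1 v2
          rw [e1] at v1
          rw [e2] at v2
          rw [← v1, ← v2]
        · push_neg at hex
          obtain ⟨f, hfS, hfnot⟩ := SetLike.exists_of_lt
            (lt_of_le_of_ne (hOC w) (Ne.symm hbox))
          have hfab : f ka' = f kb' := hex f hfS
          rw [ocSub_of_nonneg μ hnw] at hfnot
          have hconstw : constV μ w ∈ S w := by
            apply hOC w
            rw [ocSub_of_nonneg μ hnw]
            exact Submodule.mem_span_singleton_self _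
          by_cases hiw : inCyl μ i w
          · -- w type III, derive labelledBy, contradiction with hnl
            set ki : {i' : Fin 3 // inCyl μ i' w} := ⟨i, hiw⟩ with hki
            have hcovw : ∀ k : {i' : Fin 3 // inCyl μ i' w}, k = ki ∨ k = ka' ∨ k = kb' := by
              intro k
              rcases fin3 i k.1 with h | h | h
              exacts [Or.inl (Subtype.ext h), Or.inr (Or.inl (Subtype.ext h)),
                Or.inr (Or.inr (Subtype.ext h))]
            have hfi : f ki ≠ f ka' := by
              intro he
              apply hfnot
              rw [Submodule.mem_span_singleton]
              refine ⟨f ka', funext fun k => ?_⟩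
              rcases hcovw k with rfl | rfl | rfl <;>
                simp [constV, he, hfab]
            have hallw : ∀ i', inCyl μ i' w := by
              intro i'
              rcases fin3 i i' with rfl | rfl | rfl
              exacts [hiw, ha', hb']
            have hn3 : numCyl μ w = 3 := (numCyl_three_iff μ).2 hallw
            -- χ ∈ S w
            have hχ : (fun k : {i' : Fin 3 // inCyl μ i' w} =>
                if k.1 = i then (1:ℂ) else 0) ∈ S w := by
              have : (fun k : {i' : Fin 3 // inCyl μ i' w} => if k.1 = i then (1:ℂ) else 0) =
                  (f ki - f ka')⁻¹ • (f - f ka' • constV μ w) := by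
                funext k
                have hd : f ki - f ka' ≠ 0 := sub_ne_zero.2 hfi
                rcases hcovw k with rfl | rfl | rfl
                · simp [constV, inv_mul_cancel₀ hd]; rfl
                · have : ((i:Fin 3) + 1 = i) = False := by
                    simp [(finNe i).1]
                  simp [constV, (finNe i).1]; exact (finNe i).1
                · simp [constV, (finNe i).2.1, hfab]; exact (finNe i).2.1
              rw [this]
              exact Submodule.smul_mem _ _ (sub_mem hfS (Submodule.smul_mem _ _ hconstw))
            refine absurd (⟨⟨hnw, hn3⟩, le_antisymm ?_ ?_⟩ : labelledBy μ S w i) hnl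
            · intro h hhS
              have hhab : h ka' = h kb' := hex h hhS
              rw [Submodule.mem_sup]
              refine ⟨h ka' • constV μ w, ?_, (h ki - h ka') •
                (fun k : {i' : Fin 3 // inCyl μ i' w} => if k.1 = i then (1:ℂ) else 0), ?_, ?_⟩
              · rw [ocSub_of_nonneg μ hnw]
                exact Submodule.smul_mem _ _ (Submodule.mem_span_singleton_self _)
              · exact Submodule.smul_mem _ _ (Submodule.mem_span_singleton_self _)
              · funext k
                rcases hcovw k with rfl | rfl | rfl <;>
                  simp [constV, (finNe i).1, (finNe i).2.1, hhab, show ki.1 = i from rfl,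
                    show ka'.1 = i + 1 from rfl, show kb'.1 = i + 2 from rfl] <;> ring
            · rw [sup_le_iff]
              constructor
              · exact hOC w
              · rw [lineI, Submodule.span_le, Set.singleton_subset_iff]
                exact hχ
          · -- fiber of w has only ka', kb'; f constant, contradiction
            refine absurd (Submodule.mem_span_singleton.2 ⟨f ka', funext fun k => ?_⟩) hfnot
            have hcovw : k = ka' ∨ k = kb' := by
              rcases fin3 i k.1 with h | h | h
              · exact absurd (h ▸ k.2) hiw
              · exact Or.inl (Subtype.ext h)
              · exact Or.inr (Subtype.ext h)
            rcases hcovw with rfl | rfl <;> simp [constV, hfab]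
      · -- w not nonnegative
        have hocw : ocSub μ w = ⊥ := ocSub_of_neg μ hnw
        have hSw' : S w ≠ ⊥ := by rw [← hocw]; exact hbox
        obtain ⟨f, hfS, hf0⟩ := (Submodule.ne_bot_iff _).1 hSw'
        obtain ⟨k, hk⟩ : ∃ k, f k ≠ 0 := by
          by_contra h
          push_neg at h
          exact hf0 (funext h)
        -- k.1 is the unique cylinder of w, and it's a cylinder of w + eW j
        have huniqw : ∀ k' : {i' : Fin 3 // inCyl μ i' w}, k' = k :=
          fun k' => Subtype.ext (uniq_cyl μ hnw k'.2 k.2)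
        -- j is the negative coordinate of w, which is k.1
        obtain ⟨d, hd⟩ : ∃ d, w d < 0 := by
          by_contra h
          push_neg at h
          exact hnw fun c => not_lt.1 (by simpa using h c)
        have hdk : d = k.1 := neg_coord μ k.2 hd
        have hdj : d = j := by
          by_contra hne
          have h1 : (w + eW j) d = w d := by
            show w d + eW j d = w d
            simp [eW, hne]
          have := hn' d
          omega
        have hjk : j = k.1 := by rw [← hdj, hdk]
        have hik : inCyl μ k.1 (w + eW j) := by
          subst hjk
          obtain ⟨h1, h2, h3⟩ := k.2
          have e1 : (w + eW k.1) (k.1 + 1) = w (k.1 + 1) := by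
            show w _ + eW k.1 _ = w _
            simp [eW, (finNe k.1).1]
          have e2 : (w + eW k.1) (k.1 + 2) = w (k.1 + 2) := by
            show w _ + eW k.1 _ = w _
            simp [eW, (finNe k.1).2.1]
          exact ⟨by rw [e1]; exact h1, by rw [e2]; exact h2, by rw [e1, e2]; exact h3⟩
        have hgS : mapV μ j w f ∈ S (w + eW j) := hMC w j (Submodule.mem_map_of_mem hfS)
        -- one of ka, kb has .1 = k.1, the other not
        have hk1ne : k.1 ≠ i := fun he => hi (by rw [← he]; exact hik)
        intro hEq
        rw [hEq, ocSub_of_nonneg μ hn', Submodule.mem_span_singleton] at hgS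
        obtain ⟨c, hc⟩ := hgS
        -- evaluate at the point over k.1 and at the other point
        have hval1 : mapV μ j w f ⟨k.1, hik⟩ = f k :=
          mapV_apply_pos μ j f ⟨k.1, hik⟩ k.2
        have h1 : c = f k := by
          have := congrFun hc ⟨k.1, hik⟩
          simp only [Pi.smul_apply, smul_eq_mul, constV, mul_one] at this
          rw [hval1] at this
          exact this
        -- other point: some kc with kc.1 ≠ k.1
        have hexo : ∃ kc : {i' : Fin 3 // inCyl μ i' (w + eW j)}, kc.1 ≠ k.1 := by
          by_cases h : (i + 1 : Fin 3) = k.1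
          · refine ⟨kb, ?_⟩
            rw [← h]
            exact (finNe i).2.2.symm ∘ Eq.symm ∘ Eq.symm
          · exact ⟨ka, h⟩
        obtain ⟨kc, hkc⟩ := hexo
        have hval2 : mapV μ j w f kc = 0 := by
          apply mapV_apply_neg
          intro hcyl
          exact hkc (uniq_cyl μ hnw hcyl k.2)
        have h2 : c = 0 := by
          have := congrFun hc kc
          simp only [Pi.smul_apply, smul_eq_mul, constV, mul_one] at this
          rw [hval2] at this
          exact this
        rw [h1] at h2
        exact hk h2
  · -- backward
    rintro ⟨h1, h2, h3⟩ w j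
    by_cases hcyl : ∃ i, inCyl μ i (w + eW j)
    · by_cases hb : S w = ocSub μ w
      · rw [hb]
        exact le_trans (map_ocSub μ w j) (hOC _)
      · by_cases hn' : nonnegW (w + eW j)
        · have hconst' : constV μ (w + eW j) ∈ S (w + eW j) := by
            apply hOC
            rw [ocSub_of_nonneg μ hn']
            exact Submodule.mem_span_singleton_self _
          by_cases hall : ∀ i, inCyl μ i (w + eW j)
          · exact h3 w j ⟨hn', (numCyl_three_iff μ).2 hall⟩
          · push_neg at hall
            obtain ⟨i, hi⟩ := hall
            by_cases h2c : inCyl μ (i + 1) (w + eW j) ∧ inCyl μ (i + 2) (w + eW j)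
            · -- type II
              have hnum2 : numCyl μ (w + eW j) = 2 := numCyl_two_of μ hi h2c.1 h2c.2
              by_cases hlab : labelledBy μ S w i
              · obtain ⟨⟨hnw, hn3⟩, hSeq⟩ := hlab
                have hallw : ∀ i', inCyl μ i' w := (numCyl_three_iff μ).1 hn3
                intro x hx
                obtain ⟨f, hfS, rfl⟩ := hx
                have hfS' : f ∈ ocSub μ w ⊔ lineI μ w i := by rw [← hSeq]; exact hfS
                rw [Submodule.mem_sup] at hfS'
                obtain ⟨p, hp, q, hq, rfl⟩ := hfS'
                rw [ocSub_of_nonneg μ hnw, Submodule.mem_span_singleton] at hp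
                obtain ⟨c, rfl⟩ := hp
                rw [lineI, Submodule.mem_span_singleton] at hq
                obtain ⟨d, rfl⟩ := hq
                have hzero : mapV μ j w
                    (fun k : {i' : Fin 3 // inCyl μ i' w} => if k.1 = i then (1:ℂ) else 0) = 0 := by
                  funext k
                  rw [mapV_apply_pos μ j _ k (hallw k.1)]
                  have : k.1 ≠ i := fun he => hi (he ▸ k.2)
                  simp [this]
                have : mapV μ j w (c • constV μ w + d •
                    (fun k : {i' : Fin 3 // inCyl μ i' w} => if k.1 = i then (1:ℂ) else 0)) =
                    c • constV μ (w + eW j) := by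
                  rw [map_add, map_smul, map_smul, mapV_const μ hnw j, hzero, smul_zero, add_zero]
                rw [this]
                exact Submodule.smul_mem _ _ hconst'
              · have hsb' : S (w + eW j) ≠ ocSub μ (w + eW j) :=
                  h2 w j i ⟨hn', hnum2⟩ hi hb hlab
                set ka : {i' : Fin 3 // inCyl μ i' (w + eW j)} := ⟨i + 1, h2c.1⟩
                set kb : {i' : Fin 3 // inCyl μ i' (w + eW j)} := ⟨i + 2, h2c.2⟩
                have hcover : ∀ k : {i' : Fin 3 // inCyl μ i' (w + eW j)}, k = ka ∨ k = kb := by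
                  intro k
                  rcases fin3 i k.1 with h | h | h
                  · exact absurd (h ▸ k.2) hi
                  · exact Or.inl (Subtype.ext h)
                  · exact Or.inr (Subtype.ext h)
                obtain ⟨g, hgS, hgnot⟩ := SetLike.exists_of_lt
                  (lt_of_le_of_ne (hOC _) (Ne.symm hsb'))
                rw [ocSub_of_nonneg μ hn'] at hgnot
                have hne : g ka ≠ g kb := by
                  intro he
                  apply hgnot
                  rw [Submodule.mem_span_singleton]
                  refine ⟨g ka, funext fun k => ?_⟩
                  rcases hcover k with rfl | rfl <;> simp [constV, he]
                rw [eq_top_of_two μ (S (w + eW j)) ka kb hcover hconst' hgS hne]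
                exact le_top
            · -- exactly one cylinder
              obtain ⟨i₀, hi₀⟩ := hcyl
              have huniq : ∀ k : {i' : Fin 3 // inCyl μ i' (w + eW j)}, k = ⟨i₀, hi₀⟩ := by
                intro k
                apply Subtype.ext
                have hk2 := k.2
                have hk1 : k.1 = i + 1 ∨ k.1 = i + 2 := by
                  rcases fin3 i k.1 with h | h | h
                  · exact absurd (h ▸ hk2) hi
                  · exact Or.inl h
                  · exact Or.inr h
                have hi01 : i₀ = i + 1 ∨ i₀ = i + 2 := by
                  rcases fin3 i i₀ with h | h | h
                  · exact absurd (h ▸ hi₀) hi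
                  · exact Or.inl h
                  · exact Or.inr h
                rcases hk1 with e | e <;> rcases hi01 with e' | e'
                · exact e.trans e'.symm
                · exact absurd ⟨e ▸ hk2, e' ▸ hi₀⟩ h2c
                · exact absurd ⟨e' ▸ hi₀, e ▸ hk2⟩ h2c
                · exact e.trans e'.symm
              have hconst' : constV μ (w + eW j) ∈ S (w + eW j) := by
                apply hOC
                rw [ocSub_of_nonneg μ hn']
                exact Submodule.mem_span_singleton_self _
              rw [eq_top_of_unique μ (S (w + eW j)) ⟨i₀, hi₀⟩ huniq hconst' one_ne_zero]
              exact le_top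
        · -- type I⁻
          have hsb' : S (w + eW j) ≠ ocSub μ (w + eW j) := h1 w j ⟨hcyl, hn'⟩ hb
          obtain ⟨i₀, hi₀⟩ := hcyl
          have huniq : ∀ k : {i' : Fin 3 // inCyl μ i' (w + eW j)}, k = ⟨i₀, hi₀⟩ :=
            fun k => Subtype.ext (uniq_cyl μ hn' k.2 hi₀)
          rw [ocSub_of_neg μ hn'] at hsb'
          obtain ⟨g, hgS, hg0⟩ := (Submodule.ne_bot_iff _).1 hsb'
          have hgk : g ⟨i₀, hi₀⟩ ≠ 0 := by
            intro hz
            exact hg0 (funext fun k => by rw [huniq k]; exact hz)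
          rw [eq_top_of_unique μ (S (w + eW j)) ⟨i₀, hi₀⟩ huniq hgS hgk]
          exact le_top
    · intro x hx
      obtain ⟨f, hfS, rfl⟩ := hx
      have : mapV μ j w f = 0 := funext fun k => absurd ⟨k.1, k.2⟩ hcyl
      rw [this]
      exact (S _).zero_mem

end
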